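/- arXiv:1605.03546 — 2 statements merged into one kernel-verified Lean document; each statement's English description precedes it below -/
import Mathlib

section
/- During a pebbled simulation of the run, flow conservation of remaining pebbles holds at every vertex except d and the current vertex, where the outgoing pebble count exceeds the incoming pebble count by exactly one; and at every vertex v, the pebble counts on the two outgoing edges (v,s₀(v)) and (v,s₁(v)) differ by at most one, with never the odd edge having been traversed more often than the even edge. -/
open scoped Classical

/-- A switch graph: every vertex has an even successor `s0 v` and an odd successor `s1 v`. -/
structure SwitchGraph (V : Type) where
  s0 : V → V
  s1 : V → V

namespace SwitchGraph

variable {V : Type}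

/-- The successor of `v` along the edge of parity `b` (`false` = even, `true` = odd). -/
def succ (G : SwitchGraph V) (v : V) (b : Bool) : V :=
  if b then G.s1 v else G.s0 v

/-- One step of the run: move to the currently active successor and flip the switch. -/
def step [DecidableEq V] (G : SwitchGraph V) (p : V × (V → Bool)) : V × (V → Bool) :=
  (G.succ p.1 (p.2 p.1), Function.update p.2 p.1 (!p.2 p.1))

/-- The state of the run after `n` steps, starting at `o` with all switches even,
stopping (freezing) upon reaching `d`. -/
def run [DecidableEq V] (G : SwitchGraph V) (o d : V) (n : ℕ) : V × (V → Bool) :=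
  (fun p => if p.1 = d then p else G.step p)^[n] (o, fun _ => false)

/-- The run from `o` terminates at `d`. -/
def Terminates [DecidableEq V] (G : SwitchGraph V) (o d : V) : Prop :=
  ∃ n, (G.run o d n).1 = d

/-- Number of traversals of the outgoing edge of `v` of parity `b` during
the first `N` steps of the run. -/
def traversals [DecidableEq V] (G : SwitchGraph V) (o d : V) (N : ℕ) (v : V) (b : Bool) : ℕ :=
  ((Finset.range N).filter
    (fun n => (G.run o d n).1 = v ∧ v ≠ d ∧ (G.run o d n).2 v = b)).card

/-- Total weight on edges leaving `v`. -/
def outflow {M : Type} [AddCommMonoid M] (x : V → Bool → M) (v : V) : M :=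
  x v false + x v true

/-- Total weight on edges entering `v`. -/
def inflow [Fintype V] [DecidableEq V] (G : SwitchGraph V) {M : Type} [AddCommMonoid M]
    (x : V → Bool → M) (v : V) : M :=
  ∑ u : V, ∑ b : Bool, if G.succ u b = v then x u b else 0

/-- A switching flow: flow conservation of value 1 from `o` to `d`, together with the
balancing condition `x v true ≤ x v false ≤ x v true + 1` at every vertex. -/
def IsSwitchingFlow [Fintype V] [DecidableEq V] (G : SwitchGraph V) (o d : V)
    (x : V → Bool → ℕ) : Prop :=
  (∀ v, outflow x v + (if v = d then 1 else 0) = G.inflow x v + (if v = o then 1 else 0)) ∧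
  (∀ v, x v true ≤ x v false ∧ x v false ≤ x v true + 1)

/-- The edge relation of the underlying directed graph `(V, E)`. -/
def stepRel (G : SwitchGraph V) (a b : V) : Prop :=
  G.s0 a = b ∨ G.s1 a = b

/-- A dead end: a vertex with no directed path to `d` in `(V, E)`. -/
def DeadEnd (G : SwitchGraph V) (d w : V) : Prop :=
  ¬ Relation.ReflTransGen G.stepRel w d

/-- There is a directed walk of length `k` from `w` to `d` in `(V, E)`. -/
def Chain (G : SwitchGraph V) (w d : V) (k : ℕ) : Prop :=
  ∃ f : ℕ → V, f 0 = w ∧ f k = d ∧ ∀ i < k, G.stepRel (f i) (f (i + 1))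

end SwitchGraph

open SwitchGraph

/-!
The traversal counts after `N` steps form a unit flow from `o` to the current vertex: each
step adds one edge leaving the current sink and moves the sink to its head, and a run frozen
at `d` adds nothing. Subtracting them from the switching flow `x`, a unit flow from `o` to `d`,
leaves a unit flow from the current vertex to `d`. The switch of `v` is odd exactly when its
even edge has been traversed once more than its odd edge, which gives the balancing bounds.
-/

namespace SwitchGraph

variable {V M : Type}

lemma outflow_add [AddCommMonoid M] (y z : V → Bool → M) (v : V) :
    outflow (y + z) v = outflow y v + outflow z v := by
  simp only [outflow, Pi.add_apply]
  abel

lemma outflow_sub [AddCommGroup M] (y z : V → Bool → M) (v : V) :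
    outflow (y - z) v = outflow y v - outflow z v := by
  simp only [outflow, Pi.sub_apply]
  abel

variable [DecidableEq V]

lemma outflow_single [AddCommMonoid M] [One M] (a v : V) (c : Bool) :
    outflow (Pi.single a (Pi.single c (1 : M))) v = if v = a then 1 else 0 := by
  by_cases hv : v = a
  · subst hv
    cases c <;> simp [outflow]
  · simp [outflow, hv]

section Flow

variable [Fintype V] (G : SwitchGraph V)

lemma inflow_add [AddCommMonoid M] (y z : V → Bool → M) (v : V) :
    G.inflow (y + z) v = G.inflow y v + G.inflow z v := by
  simp only [inflow, Pi.add_apply, ← Finset.sum_add_distrib, ← ite_add_zero]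

lemma inflow_sub [AddCommGroup M] (y z : V → Bool → M) (v : V) :
    G.inflow (y - z) v = G.inflow y v - G.inflow z v := by
  simp only [inflow, Pi.sub_apply, ← Finset.sum_sub_distrib, ite_sub_ite, sub_zero]

lemma inflow_single [AddCommMonoid M] [One M] (a v : V) (c : Bool) :
    G.inflow (Pi.single a (Pi.single c (1 : M))) v = if v = G.succ a c then 1 else 0 := by
  rw [inflow, Finset.sum_eq_single a (fun u _ hu => by simp [hu]) (by simp), Fintype.sum_bool]
  cases c <;> simp [eq_comm]

def IsUnitFlow [AddCommMonoid M] [One M] (s t : V) (y : V → Bool → M) : Prop :=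
  ∀ v, outflow y v + (if v = t then 1 else 0) = G.inflow y v + (if v = s then 1 else 0)

variable {G}

theorem IsUnitFlow.natCast [AddCommMonoidWithOne M] {s t : V} {y : V → Bool → ℕ}
    (hy : G.IsUnitFlow s t y) : G.IsUnitFlow s t (fun u b => (y u b : M)) := fun v => by
  simpa [outflow, inflow, Nat.cast_sum, Nat.cast_ite] using congrArg (Nat.cast : ℕ → M) (hy v)

theorem IsUnitFlow.sub [AddCommGroup M] [One M] {s t t' : V} {y z : V → Bool → M}
    (hy : G.IsUnitFlow s t y) (hz : G.IsUnitFlow s t' z) : G.IsUnitFlow t' t (y - z) := by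
  intro v
  have h := congrArg₂ (· - ·) (hy v) (hz v)
  rw [outflow_sub, inflow_sub]
  refine sub_eq_zero.mp (Eq.trans ?_ (sub_eq_zero.mpr h))
  abel

theorem IsUnitFlow.add_single [AddCommMonoid M] [One M] {s a : V} {y : V → Bool → M}
    (hy : G.IsUnitFlow s a y) (c : Bool) :
    G.IsUnitFlow s (G.succ a c) (y + Pi.single a (Pi.single c 1)) := by
  intro v
  rw [outflow_add, inflow_add, outflow_single, inflow_single, hy v, add_right_comm]

end Flow

section Run

variable (G : SwitchGraph V) (o d : V)

lemma run_zero : G.run o d 0 = (o, fun _ => false) := rfl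

lemma traversals_zero : G.traversals o d 0 = 0 := by
  ext v b
  exact Finset.card_eq_zero.mpr (Finset.filter_empty _)

lemma run_succ_of_eq {N : ℕ} (h : (G.run o d N).1 = d) : G.run o d (N + 1) = G.run o d N := by
  rw [run, Function.iterate_succ_apply', ← run, if_pos h]

lemma run_succ_of_ne {N : ℕ} (h : (G.run o d N).1 ≠ d) :
    G.run o d (N + 1) = G.step (G.run o d N) := by
  rw [run, Function.iterate_succ_apply', ← run, if_neg h]

lemma traversals_succ (N : ℕ) (v : V) (b : Bool) :
    G.traversals o d (N + 1) v b = G.traversals o d N v b +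
      if (G.run o d N).1 = v ∧ v ≠ d ∧ (G.run o d N).2 v = b then 1 else 0 := by
  rw [traversals, traversals, Finset.range_add_one, Finset.filter_insert]
  split_ifs
  · rw [Finset.card_insert_of_notMem (by simp)]
  · rfl

lemma traversals_succ_of_eq {N : ℕ} (h : (G.run o d N).1 = d) :
    G.traversals o d (N + 1) = G.traversals o d N := by
  ext v b
  rw [traversals_succ, if_neg (by rintro ⟨rfl, hv, -⟩; exact hv h), add_zero]

lemma traversals_succ_of_ne {N : ℕ} (h : (G.run o d N).1 ≠ d) :
    G.traversals o d (N + 1) = G.traversals o d N +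
      Pi.single (G.run o d N).1 (Pi.single ((G.run o d N).2 (G.run o d N).1) 1) := by
  ext v b
  rw [traversals_succ, Pi.add_apply, Pi.add_apply]
  congr 1
  by_cases hv : (G.run o d N).1 = v
  · subst hv
    simp [h, Pi.single_apply, eq_comm]
  · simp [hv, Ne.symm hv]

theorem traversals_isUnitFlow [Fintype V] (N : ℕ) :
    G.IsUnitFlow o (G.run o d N).1 (G.traversals o d N) := by
  induction N with
  | zero =>
    -- `rw`, not `simp`: the current vertex also occurs inside the `Decidable` instance of an `if`
    rw [run_zero, traversals_zero]
    simp [IsUnitFlow, outflow, inflow]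
  | succ N ih =>
    by_cases h : (G.run o d N).1 = d
    · rwa [run_succ_of_eq G o d h, traversals_succ_of_eq G o d h]
    · rw [run_succ_of_ne G o d h, traversals_succ_of_ne G o d h]
      exact ih.add_single _

theorem traversals_false_eq_true_add_toNat (N : ℕ) (v : V) :
    G.traversals o d N v false = G.traversals o d N v true + ((G.run o d N).2 v).toNat := by
  induction N with
  | zero => simp [traversals_zero, run_zero]
  | succ N ih =>
    by_cases h : (G.run o d N).1 = d
    · rwa [run_succ_of_eq G o d h, traversals_succ_of_eq G o d h]
    · rw [run_succ_of_ne G o d h, traversals_succ_of_ne G o d h]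
      generalize G.run o d N = p at ih h ⊢
      obtain ⟨a, f⟩ := p
      by_cases hv : v = a
      · subst hv
        cases hf : f v <;> simp_all [step]
      · simp [step, hv, ih]

lemma traversals_true_le_false (N : ℕ) (v : V) :
    G.traversals o d N v true ≤ G.traversals o d N v false := by
  rw [traversals_false_eq_true_add_toNat]
  exact Nat.le_add_right _ _

lemma traversals_false_le_true_add_one (N : ℕ) (v : V) :
    G.traversals o d N v false ≤ G.traversals o d N v true + 1 := by
  rw [traversals_false_eq_true_add_toNat]
  exact Nat.add_le_add_left (Bool.toNat_le _) _

end Run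

end SwitchGraph

theorem stmt6_general {V : Type} [Fintype V] [DecidableEq V] (G : SwitchGraph V) (o d : V)
    (x : V → Bool → ℕ) (hx : G.IsSwitchingFlow o d x) (N : ℕ) :
    (∀ v, v ≠ d → v ≠ (G.run o d N).1 →
      outflow (fun u b => (x u b : ℤ) - G.traversals o d N u b) v
        = G.inflow (fun u b => (x u b : ℤ) - G.traversals o d N u b) v) ∧
    ((G.run o d N).1 ≠ d →
      outflow (fun u b => (x u b : ℤ) - G.traversals o d N u b) (G.run o d N).1
        = G.inflow (fun u b => (x u b : ℤ) - G.traversals o d N u b) (G.run o d N).1 + 1) ∧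
    (∀ v, |((x v false : ℤ) - G.traversals o d N v false)
            - ((x v true : ℤ) - G.traversals o d N v true)| ≤ 1 ∧
      G.traversals o d N v true ≤ G.traversals o d N v false) := by
  have hx_flow : G.IsUnitFlow o d x := hx.1
  have remaining_flow : G.IsUnitFlow (G.run o d N).1 d
      (fun u b => (x u b : ℤ) - G.traversals o d N u b) :=
    hx_flow.natCast.sub (G.traversals_isUnitFlow o d N).natCast
  refine ⟨fun v hvd hvN => ?_, fun hN => ?_, fun v => ⟨?_, G.traversals_true_le_false o d N v⟩⟩
  · simpa [hvd, hvN] using remaining_flow v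
  · simpa [hN] using remaining_flow (G.run o d N).1
  · have hx_bal := hx.2 v
    have h_le := G.traversals_true_le_false o d N v
    have h_le' := G.traversals_false_le_true_add_one o d N v
    rw [abs_le]
    omega

/-- Pebble invariants: with `x(e)` pebbles per edge and one pebble collected per traversal,
flow conservation of remaining pebbles holds except at `d` and at the current vertex (which
has one extra outgoing pebble); moreover the remaining pebbles on the two outgoing edges of
any vertex differ by at most one, and the odd edge is never traversed more often than the
even edge. -/
theorem stmt6 {V : Type} [Fintype V] [DecidableEq V] (G : SwitchGraph V) (o d : V)
    (hod : o ≠ d) (x : V → Bool → ℕ) (hx : G.IsSwitchingFlow o d x) (N : ℕ) :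
    (∀ v, v ≠ d → v ≠ (G.run o d N).1 →
      outflow (fun u b => (x u b : ℤ) - G.traversals o d N u b) v
        = G.inflow (fun u b => (x u b : ℤ) - G.traversals o d N u b) v) ∧
    ((G.run o d N).1 ≠ d →
      outflow (fun u b => (x u b : ℤ) - G.traversals o d N u b) (G.run o d N).1
        = G.inflow (fun u b => (x u b : ℤ) - G.traversals o d N u b) (G.run o d N).1 + 1) ∧
    (∀ v, |((x v false : ℤ) - G.traversals o d N v false)
            - ((x v true : ℤ) - G.traversals o d N v true)| ≤ 1 ∧
      G.traversals o d N v true ≤ G.traversals o d N v false) :=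
  stmt6_general G o d x hx N
end

section
/- If the run from o reaches a dead end, then it never reaches d; hence the run fails to terminate if and only if it reaches a dead end. -/
open scoped Classical

open SwitchGraph

/-!
Reaching `d` freezes the run, and every step follows an edge, so a run that visits a dead end
never reaches `d`. Conversely, if the run never reaches `d`, some vertex `v` is visited infinitely
often since `V` is finite. Its switch flips at every visit, so both successors of `v` are visited
infinitely often as well; hence so is every vertex reachable from `v`. As `d` is never visited,
`v` is a dead end.
-/

open Filter

namespace SwitchGraph

variable {V : Type} (G : SwitchGraph V)

lemma stepRel_succ (v : V) (b : Bool) : G.stepRel v (G.succ v b) := by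
  cases b
  · exact Or.inl rfl
  · exact Or.inr rfl

variable [DecidableEq V] {o d : V}

lemma run_succ (n : ℕ) :
    G.run o d (n + 1) = if (G.run o d n).1 = d then G.run o d n else G.step (G.run o d n) :=
  Function.iterate_succ_apply' _ _ _

lemma run_eq_of_le {n m : ℕ} (hnm : n ≤ m) (h : (G.run o d n).1 = d) :
    G.run o d m = G.run o d n := by
  induction m, hnm using Nat.le_induction with
  | base => rfl
  | succ m _ ih => rw [run_succ, ih, if_pos h]

lemma reflTransGen_run_of_le {n m : ℕ} (hnm : n ≤ m) :
    Relation.ReflTransGen G.stepRel (G.run o d n).1 (G.run o d m).1 := by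
  induction m, hnm using Nat.le_induction with
  | base => exact .refl
  | succ m _ ih =>
    refine ih.trans ?_
    rw [run_succ]
    split
    · exact .refl
    · exact .single (G.stepRel_succ _ _)

theorem not_terminates_of_deadEnd {N : ℕ} (hN : G.DeadEnd d (G.run o d N).1) :
    ¬ G.Terminates o d := by
  rintro ⟨n, hn⟩
  have hreach := G.reflTransGen_run_of_le (o := o) (d := d) (le_max_left N n)
  rw [G.run_eq_of_le (le_max_right N n) hn, hn] at hreach
  exact hN hreach

section NonTerminating

variable {G} (hT : ¬ G.Terminates o d)
include hT

lemma run_succ_of_not_terminates (n : ℕ) : G.run o d (n + 1) = G.step (G.run o d n) := by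
  rw [run_succ, if_neg fun h => hT ⟨n, h⟩]

lemma run_snd_succ_of_ne {n : ℕ} {v : V} (hv : (G.run o d n).1 ≠ v) :
    (G.run o d (n + 1)).2 v = (G.run o d n).2 v := by
  rw [run_succ_of_not_terminates hT]
  exact Function.update_of_ne hv.symm _ _

lemma run_snd_succ_self (n : ℕ) :
    (G.run o d (n + 1)).2 (G.run o d n).1 = !(G.run o d n).2 (G.run o d n).1 := by
  rw [run_succ_of_not_terminates hT]
  exact Function.update_self _ _ _

/-- Between two visits of `v` the switch at `v` is untouched, so it is flipped at the next visit. -/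
lemma exists_visit_switch_flipped {v : V} {n m : ℕ} (hn : (G.run o d n).1 = v) (hnm : n < m)
    (hm : (G.run o d m).1 = v) :
    ∃ k, n < k ∧ (G.run o d k).1 = v ∧ (G.run o d k).2 v = !(G.run o d n).2 v := by
  have hex : ∃ k, n < k ∧ (G.run o d k).1 = v := ⟨m, hnm, hm⟩
  obtain ⟨hnk, hk⟩ := Nat.find_spec hex
  refine ⟨Nat.find hex, hnk, hk, ?_⟩
  have untouched : ∀ j, n + 1 ≤ j → j ≤ Nat.find hex →
      (G.run o d j).2 v = (G.run o d (n + 1)).2 v := by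
    intro j hj hjk
    induction j, hj using Nat.le_induction with
    | base => rfl
    | succ j hj ih =>
      rw [run_snd_succ_of_ne hT fun h => Nat.find_min hex (by omega) ⟨by omega, h⟩]
      exact ih (by omega)
  rw [untouched _ hnk le_rfl, ← hn, run_snd_succ_self hT]

lemma frequently_visit_with_switch {v : V} (hv : ∃ᶠ n in atTop, (G.run o d n).1 = v) (b : Bool) :
    ∃ᶠ n in atTop, (G.run o d n).1 = v ∧ (G.run o d n).2 v = b := by
  rw [frequently_atTop] at hv ⊢
  intro N
  obtain ⟨n, hNn, hn⟩ := hv N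
  by_cases hb : (G.run o d n).2 v = b
  · exact ⟨n, hNn, hn, hb⟩
  obtain ⟨m, hnm, hm⟩ := hv (n + 1)
  obtain ⟨k, hnk, hk, hflip⟩ := exists_visit_switch_flipped hT hn hnm hm
  exact ⟨k, by omega, hk, hflip.trans (Bool.not_eq.mpr hb)⟩

lemma frequently_visit_succ {v : V} (hv : ∃ᶠ n in atTop, (G.run o d n).1 = v) (b : Bool) :
    ∃ᶠ n in atTop, (G.run o d n).1 = G.succ v b := by
  have hvb := frequently_visit_with_switch hT hv b
  rw [frequently_atTop] at hvb ⊢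
  intro N
  obtain ⟨n, hNn, hn, hb⟩ := hvb N
  refine ⟨n + 1, by omega, ?_⟩
  rw [run_succ_of_not_terminates hT, step, hn, hb]

lemma frequently_visit_of_reflTransGen {v w : V} (hv : ∃ᶠ n in atTop, (G.run o d n).1 = v)
    (hvw : Relation.ReflTransGen G.stepRel v w) : ∃ᶠ n in atTop, (G.run o d n).1 = w := by
  induction hvw with
  | refl => exact hv
  | tail _ hstep ih =>
    rcases hstep with h | h
    · exact h ▸ frequently_visit_succ hT ih false
    · exact h ▸ frequently_visit_succ hT ih true

theorem exists_deadEnd_of_not_terminates [Finite V] : ∃ N, G.DeadEnd d (G.run o d N).1 := by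
  obtain ⟨v, hv⟩ := Finite.exists_infinite_fiber fun n => (G.run o d n).1
  have hfreq : ∃ᶠ n in atTop, (G.run o d n).1 = v :=
    Nat.frequently_atTop_iff_infinite.2 (Set.infinite_coe_iff.1 hv)
  obtain ⟨N, hN⟩ := hfreq.exists
  refine ⟨N, fun hreach => ?_⟩
  obtain ⟨n, hn⟩ := (frequently_visit_of_reflTransGen hT hfreq (hN ▸ hreach)).exists
  exact hT ⟨n, hn⟩

end NonTerminating

end SwitchGraph

theorem stmt11_general {V : Type} [Fintype V] [DecidableEq V] (G : SwitchGraph V) (o d : V) :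
    ((∃ N, G.DeadEnd d (G.run o d N).1) → ¬ G.Terminates o d) ∧
      (¬ G.Terminates o d ↔ ∃ N, G.DeadEnd d (G.run o d N).1) := by
  have deadEnd_not_terminates : (∃ N, G.DeadEnd d (G.run o d N).1) → ¬ G.Terminates o d :=
    fun ⟨_, hN⟩ => G.not_terminates_of_deadEnd hN
  exact ⟨deadEnd_not_terminates,
    fun hT => exists_deadEnd_of_not_terminates hT, deadEnd_not_terminates⟩

/-- If the run reaches a dead end it never reaches `d`; hence nontermination is equivalent
to reaching a dead end. -/
theorem stmt11 {V : Type} [Fintype V] [DecidableEq V] (G : SwitchGraph V) (o d : V)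
    (hod : o ≠ d) :
    ((∃ N, G.DeadEnd d (G.run o d N).1) → ¬ G.Terminates o d) ∧
      (¬ G.Terminates o d ↔ ∃ N, G.DeadEnd d (G.run o d N).1) :=
  stmt11_general G o d
end
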